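/- For unit vectors q, q_d in S² with q·q_d > -1, the error function Ψ = 2 - √2·√(1 + q·q_d) and the error vector e_q = (q_d × q)/(√2·√(1 + q·q_d)) satisfy the locally quadratic bounds ‖e_q‖² ≤ Ψ ≤ 2‖e_q‖². -/

import Mathlib

/-!
With `c = ⟪q, qd⟫` and `t = √2 · √(1 + c) = √(2 (1 + c)) ∈ (0, 2]`, Lagrange's identity gives
`‖e_q‖² = (1 - c²) / t² = (1 - c) / 2 = (2 - t)(2 + t) / 4`, while `Ψ = 2 - t`.
Both bounds then come from `2 ≤ 2 + t ≤ 4`.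
-/

open scoped RealInnerProductSpace

noncomputable def cross3 (a b : EuclideanSpace ℝ (Fin 3)) : EuclideanSpace ℝ (Fin 3) :=
  (WithLp.equiv 2 (Fin 3 → ℝ)).symm
    (crossProduct ((WithLp.equiv 2 (Fin 3 → ℝ)) a) ((WithLp.equiv 2 (Fin 3 → ℝ)) b))

lemma inner_eq_dotProduct (a b : EuclideanSpace ℝ (Fin 3)) :
    ⟪a, b⟫ = WithLp.equiv 2 (Fin 3 → ℝ) a ⬝ᵥ WithLp.equiv 2 (Fin 3 → ℝ) b := by
  simp [PiLp.inner_apply, dotProduct, mul_comm]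

lemma norm_cross3_sq (a b : EuclideanSpace ℝ (Fin 3)) :
    ‖cross3 a b‖ ^ 2 = ‖a‖ ^ 2 * ‖b‖ ^ 2 - ⟪a, b⟫ ^ 2 := by
  simp only [← real_inner_self_eq_norm_sq, inner_eq_dotProduct, cross3, Equiv.apply_symm_apply]
  rw [cross_dot_cross, dotProduct_comm (WithLp.equiv 2 _ b) (WithLp.equiv 2 _ a), sq]

lemma norm_sq_inv_sqrt_smul_cross3 {q qd : EuclideanSpace ℝ (Fin 3)} (hq : ‖q‖ = 1)
    (hqd : ‖qd‖ = 1) (h : -1 < ⟪q, qd⟫) :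
    ‖(√2 * √(1 + ⟪q, qd⟫))⁻¹ • cross3 qd q‖ ^ 2 = (1 - ⟪q, qd⟫) / 2 := by
  have hpos : 0 < 1 + ⟪q, qd⟫ := by linarith
  rw [norm_smul, mul_pow, norm_cross3_sq, hq, hqd, real_inner_comm q qd, norm_inv, norm_mul,
    Real.norm_of_nonneg (Real.sqrt_nonneg _), Real.norm_of_nonneg (Real.sqrt_nonneg _), inv_pow,
    mul_pow, Real.sq_sqrt zero_le_two, Real.sq_sqrt hpos.le]
  field_simp
  ring

lemma one_sub_div_two_le_two_sub_sqrt {c : ℝ} (hc₀ : -1 ≤ c) (hc₁ : c ≤ 1) :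
    (1 - c) / 2 ≤ 2 - √2 * √(1 + c) ∧ 2 - √2 * √(1 + c) ≤ 1 - c := by
  have ht : √2 * √(1 + c) = √(2 * (1 + c)) := (Real.sqrt_mul zero_le_two _).symm
  set t := √(2 * (1 + c))
  have ht_sq : t ^ 2 = 2 * (1 + c) := Real.sq_sqrt (by linarith)
  have ht₀ : 0 ≤ t := Real.sqrt_nonneg _
  have ht₂ : t ≤ 2 := Real.sqrt_le_iff.mpr ⟨zero_le_two, by linarith⟩
  rw [ht]
  constructor
  · nlinarith [sq_nonneg (2 - t)]
  · nlinarith [mul_nonneg (sub_nonneg.mpr ht₂) ht₀]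

theorem stmt3 (q qd : EuclideanSpace ℝ (Fin 3)) (hq : ‖q‖ = 1) (hqd : ‖qd‖ = 1)
    (h : -1 < ⟪q, qd⟫) :
    ‖(Real.sqrt 2 * Real.sqrt (1 + ⟪q, qd⟫))⁻¹ • cross3 qd q‖ ^ 2 ≤
        2 - Real.sqrt 2 * Real.sqrt (1 + ⟪q, qd⟫) ∧
      2 - Real.sqrt 2 * Real.sqrt (1 + ⟪q, qd⟫) ≤
        2 * ‖(Real.sqrt 2 * Real.sqrt (1 + ⟪q, qd⟫))⁻¹ • cross3 qd q‖ ^ 2 := by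
  have hc₁ : ⟪q, qd⟫ ≤ 1 := by simpa [hq, hqd] using real_inner_le_norm q qd
  obtain ⟨hlower, hupper⟩ := one_sub_div_two_le_two_sub_sqrt h.le hc₁
  rw [norm_sq_inv_sqrt_smul_cross3 hq hqd h]
  exact ⟨hlower, by linarith⟩
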